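/- arXiv:1906.06100 — 5 statements merged into one kernel-verified Lean document; each statement's English description precedes it below -/
import Mathlib

section
/- Let H be a real inner product space whose elements are functions from a set X to ℝ (pointwise operations), and let k : X × X → ℝ be a reproducing kernel for H, meaning: for every x ∈ X the function k(·,x) belongs to H and ⟨k(·,x), f⟩_H = f(x) for every f ∈ H. Fix x₁, …, x_N ∈ X, a symmetric positive semidefinite real N×N matrix L, and μ > 0; write f_U = (f(x₁),…,f(x_N))ᵀ, let K be the N×N Gram matrix K_{ij} = k(xᵢ,xⱼ), let k_y = (k(x₁,y),…,k(x_N,y))ᵀ for y ∈ X, and assume the matrix μ⁻¹I + LK is invertible. For y ∈ X define η(y) = (μ⁻¹I + LK)⁻¹ L k_y ∈ ℝᴺ and k̃(·,y) = k(·,y) − Σᵢ₌₁ᴺ η(y)ᵢ · k(·,xᵢ) ∈ H. Then k̃ is a reproducing kernel for H equipped with the modified inner product ⟨f,g⟩_H̃ = ⟨f,g⟩_H + μ·f_Uᵀ L g_U; that is, for every y ∈ X and every f ∈ H, ⟨k̃(·,y), f⟩_H + μ·(k̃(·,y))_Uᵀ L f_U = f(y). Moreover k̃(x,y) = k(x,y)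 − k_xᵀ (μ⁻¹I + LK)⁻¹ L k_y for all x,y ∈ X. -/
open Matrix
open scoped RealInnerProductSpace

/-- The explicit reproducing kernel of the manifold-regularized space: if `k` (with
representers `Krep`) is a reproducing kernel for a real inner product space `H` of
functions `X → ℝ` (realized by the injective linear evaluation map `ev`), `L` is symmetric
positive semidefinite, `μ > 0`, `K` is the Gram matrix and `M = μ⁻¹ I + L K` is invertible,
then `k̃(·,y) = k(·,y) - Σᵢ η(y)ᵢ k(·,xᵢ)` with `η(y) = M⁻¹ L k_y` reproduces evaluation
with respect to the modified inner product `⟨f,g⟩ + μ f_Uᵀ L g_U`, and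
`k̃(x,y) = k(x,y) - k_xᵀ M⁻¹ L k_y`. -/
theorem stmt8 {H X : Type*} [NormedAddCommGroup H] [InnerProductSpace ℝ H]
    (ev : H →ₗ[ℝ] X → ℝ) (hev : Function.Injective ev)
    (k : X → X → ℝ) (Krep : X → H)
    (hmem : ∀ y, ev (Krep y) = fun z => k z y)
    (hrep : ∀ (y : X) (f : H), ⟪Krep y, f⟫ = ev f y)
    {N : ℕ} (x : Fin N → X)
    (L : Matrix (Fin N) (Fin N) ℝ) (hL : L.PosSemidef)
    (μ : ℝ) (hμ : 0 < μ)
    (K : Matrix (Fin N) (Fin N) ℝ) (hK : ∀ i j, K i j = k (x i) (x j))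
    (M : Matrix (Fin N) (Fin N) ℝ)
    (hM : M = μ⁻¹ • (1 : Matrix (Fin N) (Fin N) ℝ) + L * K)
    (hMinv : IsUnit M)
    (fU : H → Fin N → ℝ) (hfU : ∀ f i, fU f i = ev f (x i))
    (kvec : X → Fin N → ℝ) (hkvec : ∀ y i, kvec y i = k (x i) y)
    (η : X → Fin N → ℝ) (hη : ∀ y, η y = M⁻¹ *ᵥ (L *ᵥ kvec y))
    (ktrep : X → H) (hktrep : ∀ y, ktrep y = Krep y - ∑ i, η y i • Krep (x i)) :
    (∀ (y : X) (f : H),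
        ⟪ktrep y, f⟫ + μ * (fU (ktrep y) ⬝ᵥ L *ᵥ fU f) = ev f y) ∧
    (∀ x' y : X,
        ev (ktrep y) x' = k x' y - kvec x' ⬝ᵥ M⁻¹ *ᵥ (L *ᵥ kvec y)) := by
  -- symmetry of k
  have hksym : ∀ a b, k a b = k b a := by
    intro a b
    have h1 : ⟪Krep a, Krep b⟫ = k a b := by rw [hrep, hmem]
    have h2 : ⟪Krep b, Krep a⟫ = k b a := by rw [hrep, hmem]
    rw [← h1, ← h2, real_inner_comm]
  -- evaluation formula for ktrep
  have heval : ∀ y z, ev (ktrep y) z = k z y - ∑ i, η y i * k z (x i) := by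
    intro y z
    rw [hktrep, map_sub, map_sum]
    simp only [_root_.map_smul, Pi.sub_apply, Finset.sum_apply, Pi.smul_apply, smul_eq_mul,
      hmem]
  have hdet : IsUnit M.det := (Matrix.isUnit_iff_isUnit_det M).mp hMinv
  have hMη : ∀ y, M *ᵥ η y = L *ᵥ kvec y := by
    intro y
    rw [hη, Matrix.mulVec_mulVec, Matrix.mul_nonsing_inv _ hdet, Matrix.one_mulVec]
  have hkey : ∀ y, η y = μ • (L *ᵥ (kvec y - K *ᵥ η y)) := by
    intro y
    have h := hMη y
    rw [hM, Matrix.add_mulVec, Matrix.smul_mulVec, Matrix.one_mulVec,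
      ← Matrix.mulVec_mulVec] at h
    have h2 : μ⁻¹ • η y = L *ᵥ kvec y - L *ᵥ (K *ᵥ η y) := by
      rw [eq_sub_iff_add_eq]; exact h
    rw [Matrix.mulVec_sub, ← h2, smul_smul, mul_inv_cancel₀ hμ.ne', one_smul]
  -- fU (ktrep y) = kvec y - K *ᵥ η y
  have hfUkt : ∀ y, fU (ktrep y) = kvec y - K *ᵥ η y := by
    intro y
    funext i
    rw [hfU, heval, Pi.sub_apply, hkvec, Matrix.mulVec]
    congr 1
    simp only [dotProduct, hK]
    exact Finset.sum_congr rfl fun j _ => by rw [mul_comm]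
  constructor
  · intro y f
    have hinner : ⟪ktrep y, f⟫ = ev f y - ∑ i, η y i * ev f (x i) := by
      rw [hktrep, inner_sub_left, hrep, sum_inner]
      simp only [real_inner_smul_left, hrep]
    rw [hinner, hfUkt]
    have : (kvec y - K *ᵥ η y) ⬝ᵥ L *ᵥ fU f = (L *ᵥ (kvec y - K *ᵥ η y)) ⬝ᵥ fU f := by
      have hLT : Lᵀ = L := by
        have h := hL.1
        rwa [Matrix.IsHermitian, Matrix.conjTranspose_eq_transpose_of_trivial] at h
      rw [Matrix.dotProduct_mulVec, ← Matrix.mulVec_transpose, hLT]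
    rw [this]
    have hη2 : ∑ i, η y i * ev f (x i) = η y ⬝ᵥ fU f := by
      simp only [dotProduct, hfU]
    have h3 : η y ⬝ᵥ fU f = μ * (L *ᵥ (kvec y - K *ᵥ η y) ⬝ᵥ fU f) := by
      conv_lhs => rw [hkey y]
      rw [smul_dotProduct, smul_eq_mul]
    rw [hη2, h3]
    ring
  · intro x' y
    rw [heval, ← hη]
    congr 1
    simp only [dotProduct, hkvec]
    exact Finset.sum_congr rfl fun i _ => by rw [mul_comm, hksym x' (x i)]
end

section
/- Let L and K be symmetric positive semidefinite real N×N matrices and let μ > 0 (so that μ⁻¹I + LK is invertible). Then for every vector v ∈ ℝᴺ, vᵀ (μ⁻¹I + LK)⁻¹ L v ≥ 0. Consequently, the manifold-regularized kernel satisfies k̃(x,x) = k(x,x) − k_xᵀ(μ⁻¹I + LK)⁻¹ L k_x ≤ k(x,x) for every point x. -/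
/-!
Write `L = S²` with `S = √L` and put `M = c + L K`, `N = c + S K S`. Then `M S = S N`, and `N` is
positive definite. By Weinstein–Aronszajn `det M = det N`, so `M` is invertible as well and
`M⁻¹ L = (M⁻¹ S) S = S N⁻¹ S`, a congruence of the positive definite `N⁻¹`.
-/

open Matrix

namespace Matrix

variable {n : Type*} [Fintype n] [DecidableEq n]

theorem det_smul_one_add_mul_comm {F : Type*} [Field F] {c : F} (hc : c ≠ 0)
    (A B : Matrix n n F) : det (c • 1 + A * B) = det (c • 1 + B * A) := by
  have factor (X Y : Matrix n n F) : c • 1 + X * Y = c • (1 + (c⁻¹ • X) * Y) := by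
    rw [smul_add, Matrix.smul_mul, smul_smul, mul_inv_cancel₀ hc, one_smul]
  rw [factor, factor, det_smul, det_smul, det_one_add_mul_comm, Matrix.smul_mul, Matrix.mul_smul]

open scoped ComplexOrder

variable {𝕜 : Type*} [RCLike 𝕜]

theorem PosSemidef.inv_smul_one_add_mul_mul {L K : Matrix n n 𝕜} (hL : L.PosSemidef)
    (hK : K.PosSemidef) {c : ℝ} (hc : 0 < c) : ((c • 1 + L * K)⁻¹ * L).PosSemidef := by
  open MatrixOrder in
  obtain ⟨S, hS, rfl⟩ : ∃ S : Matrix n n 𝕜, S.PosSemidef ∧ S * S = L :=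
    ⟨CFC.sqrt L, (CFC.sqrt_nonneg L).posSemidef, CFC.sqrt_mul_sqrt_self L hL.nonneg⟩
  set M := c • 1 + S * S * K
  set N := c • 1 + S * K * S
  have hN : N.PosDef := by
    refine (PosDef.one.smul hc).add_posSemidef ?_
    simpa only [hS.1.eq] using hK.conjTranspose_mul_mul_same S
  have hNdet : IsUnit N.det := hN.isUnit.map detMonoidHom
  have hMdet : IsUnit M.det := by
    have hc' : (c : 𝕜) ≠ 0 := by exact_mod_cast hc.ne'
    simpa only [M, N, RCLike.real_smul_eq_coe_smul (K := 𝕜), Matrix.mul_assoc,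
      det_smul_one_add_mul_comm hc' S (S * K)] using hNdet
  have intertwine : M * S = S * N := by
    simp only [M, N, add_mul, mul_add, Matrix.smul_mul, Matrix.mul_smul, Matrix.one_mul,
      Matrix.mul_one, Matrix.mul_assoc]
  have key : M⁻¹ * S = S * N⁻¹ :=
    calc M⁻¹ * S = M⁻¹ * (S * N * N⁻¹) := by rw [mul_nonsing_inv_cancel_right _ _ hNdet]
      _ = M⁻¹ * (M * S) * N⁻¹ := by rw [intertwine]; simp only [Matrix.mul_assoc]
      _ = S * N⁻¹ := by rw [nonsing_inv_mul_cancel_left _ _ hMdet]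
  rw [← Matrix.mul_assoc, key]
  simpa only [hS.1.eq] using hN.posSemidef.inv.conjTranspose_mul_mul_same S

end Matrix

theorem stmt10_general {N : ℕ} {X : Type*} (xs : Fin N → X) (k : X → X → ℝ)
    (L K : Matrix (Fin N) (Fin N) ℝ)
    (hL : L.PosSemidef) (hK : K.PosSemidef)
    (μ : ℝ) (hμ : 0 < μ)
    (M : Matrix (Fin N) (Fin N) ℝ)
    (hM : M = μ⁻¹ • (1 : Matrix (Fin N) (Fin N) ℝ) + L * K) :
    (∀ v : Fin N → ℝ, 0 ≤ v ⬝ᵥ M⁻¹ *ᵥ (L *ᵥ v)) ∧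
    (∀ (x : X) (kx : Fin N → ℝ), (∀ i, kx i = k (xs i) x) →
      k x x - kx ⬝ᵥ M⁻¹ *ᵥ (L *ᵥ kx) ≤ k x x) := by
  have hquad (v : Fin N → ℝ) : 0 ≤ v ⬝ᵥ M⁻¹ *ᵥ (L *ᵥ v) := by
    subst hM
    simpa only [star_trivial, mulVec_mulVec] using
      (hL.inv_smul_one_add_mul_mul hK (inv_pos.2 hμ)).dotProduct_mulVec_nonneg v
  exact ⟨hquad, fun x kx _ => sub_le_self _ (hquad kx)⟩

/-- For symmetric positive semidefinite `L`, `K` and `μ > 0`, the quadratic form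
`v ↦ vᵀ (μ⁻¹ I + L K)⁻¹ L v` is nonnegative; consequently the manifold-regularized
kernel diagonal `k̃(x,x) = k(x,x) - k_xᵀ (μ⁻¹ I + L K)⁻¹ L k_x` never exceeds `k(x,x)`,
where `K` is the Gram matrix of `k` on the points `x₁, …, x_N`. -/
theorem stmt10 {N : ℕ} {X : Type*} (xs : Fin N → X) (k : X → X → ℝ)
    (L K : Matrix (Fin N) (Fin N) ℝ)
    (hL : L.PosSemidef) (hK : K.PosSemidef)
    (hKgram : ∀ i j, K i j = k (xs i) (xs j))
    (μ : ℝ) (hμ : 0 < μ)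
    (M : Matrix (Fin N) (Fin N) ℝ)
    (hM : M = μ⁻¹ • (1 : Matrix (Fin N) (Fin N) ℝ) + L * K) :
    (∀ v : Fin N → ℝ, 0 ≤ v ⬝ᵥ M⁻¹ *ᵥ (L *ᵥ v)) ∧
    (∀ (x : X) (kx : Fin N → ℝ), (∀ i, kx i = k (xs i) x) →
      k x x - kx ⬝ᵥ M⁻¹ *ᵥ (L *ᵥ kx) ≤ k x x) :=
  stmt10_general xs k L K hL hK μ hμ M hM
end

section
/- Let H be a real inner product space, φ₁, …, φ_n ∈ H, and r > 0. Then (1/n)·E_σ[ sup over w ∈ H with ‖w‖ ≤ r of Σᵢ₌₁ⁿ σᵢ·⟨w, φᵢ⟩ ] ≤ (r/n)·√(Σᵢ₌₁ⁿ ‖φᵢ‖²), where E_σ denotes the expectation over σ = (σ₁,…,σ_n) i.i.d. uniform on {−1,+1} (equivalently the average over all 2ⁿ sign vectors). -/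
open scoped RealInnerProductSpace
open Finset

lemma rad_sign (n : ℕ) (i j : Fin n) :
    ∑ s : Fin n → Bool, ((if s i then (1:ℝ) else -1) * (if s j then (1:ℝ) else -1))
      = if i = j then (2:ℝ)^n else 0 := by
  rcases eq_or_ne i j with rfl | hij
  · simp only [if_pos rfl]
    have : ∀ s : Fin n → Bool, ((if s i then (1:ℝ) else -1) * (if s i then (1:ℝ) else -1)) = 1 := by
      intro s; rcases s i <;> simp
    simp [this, Finset.card_univ]
  · rw [if_neg hij]
    apply Finset.sum_involution (fun s _ => Function.update s j (!(s j)))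
    · intro s _
      have hji : j ≠ i := hij.symm
      rcases hsi : s i <;> rcases hsj : s j <;>
        simp [hsi, hsj, Function.update_of_ne hij, Function.update_self]
    · intro s _ _ h
      have := congrFun h j
      simp at this
    · intro s _; simp
    · intro s _; simp [Function.update_idem]

lemma rad_norm_sq {H : Type*} [NormedAddCommGroup H] [InnerProductSpace ℝ H]
    (n : ℕ) (φ : Fin n → H) :
    ∑ s : Fin n → Bool, ‖∑ i, (if s i then (1:ℝ) else -1) • φ i‖ ^ 2
      = (2:ℝ)^n * ∑ i, ‖φ i‖ ^ 2 := by
  have expand : ∀ s : Fin n → Bool,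
      ‖∑ i, (if s i then (1:ℝ) else -1) • φ i‖ ^ 2
        = ∑ i, ∑ j, ((if s i then (1:ℝ) else -1) * (if s j then (1:ℝ) else -1)) * ⟪φ i, φ j⟫ := by
    intro s
    rw [← real_inner_self_eq_norm_sq, sum_inner]
    congr 1; ext i
    rw [inner_sum]
    congr 1; ext j
    rw [real_inner_smul_left, real_inner_smul_right]; ring
  simp_rw [expand]
  rw [Finset.sum_comm]
  calc ∑ i : Fin n, ∑ s : Fin n → Bool, ∑ j, ((if s i then (1:ℝ) else -1) * (if s j then (1:ℝ) else -1)) * ⟪φ i, φ j⟫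
      = ∑ i : Fin n, ∑ j, (∑ s : Fin n → Bool, ((if s i then (1:ℝ) else -1) * (if s j then (1:ℝ) else -1))) * ⟪φ i, φ j⟫ := by
        congr 1; ext i; rw [Finset.sum_comm]; simp [Finset.sum_mul]
    _ = ∑ i : Fin n, ∑ j, (if i = j then (2:ℝ)^n else 0) * ⟪φ i, φ j⟫ := by
        simp_rw [rad_sign]
    _ = (2:ℝ)^n * ∑ i, ‖φ i‖ ^ 2 := by
        simp [Finset.mul_sum, real_inner_self_eq_norm_sq, ite_mul]

/-- Upper bound on the empirical Rademacher complexity of a ball of radius `r` of linear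
functionals on an inner product space: it is at most `(r/n) √(Σᵢ ‖φᵢ‖²)`. -/
theorem stmt14 {H : Type*} [NormedAddCommGroup H] [InnerProductSpace ℝ H]
    (n : ℕ) (hn : 0 < n) (φ : Fin n → H) (r : ℝ) (hr : 0 < r) :
    (1 / n : ℝ) * ((1 / 2 ^ n : ℝ) * ∑ s : Fin n → Bool,
        sSup {v : ℝ | ∃ w : H, ‖w‖ ≤ r ∧
          v = ∑ i, (if s i then (1 : ℝ) else -1) * ⟪w, φ i⟫}) ≤
      (r / n) * Real.sqrt (∑ i, ‖φ i‖ ^ 2) := by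
  set v : (Fin n → Bool) → H := fun s => ∑ i, (if s i then (1:ℝ) else -1) • φ i with hv
  have hsup : ∀ s : Fin n → Bool,
      sSup {x : ℝ | ∃ w : H, ‖w‖ ≤ r ∧ x = ∑ i, (if s i then (1:ℝ) else -1) * ⟪w, φ i⟫}
        ≤ r * ‖v s‖ := by
    intro s
    apply Real.sSup_le
    · rintro x ⟨w, hw, rfl⟩
      have he : (∑ i, (if s i then (1:ℝ) else -1) * ⟪w, φ i⟫) = ⟪w, v s⟫ := by
        rw [hv, inner_sum]
        refine Finset.sum_congr rfl fun i _ => ?_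
        rw [real_inner_smul_right]
      rw [he]
      exact (real_inner_le_norm _ _).trans
        (mul_le_mul_of_nonneg_right hw (norm_nonneg _))
    · positivity
  have hΦ : (0:ℝ) ≤ ∑ i, ‖φ i‖ ^ 2 := Finset.sum_nonneg fun i _ => by positivity
  have hsum : ∑ s : Fin n → Bool, ‖v s‖ ≤ (2:ℝ)^n * Real.sqrt (∑ i, ‖φ i‖ ^ 2) := by
    have h1 : (∑ s : Fin n → Bool, ‖v s‖) ^ 2 ≤
        ((2:ℝ)^n * Real.sqrt (∑ i, ‖φ i‖ ^ 2)) ^ 2 := by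
      calc (∑ s : Fin n → Bool, ‖v s‖) ^ 2
          ≤ (Finset.univ.card : ℝ) * ∑ s : Fin n → Bool, ‖v s‖ ^ 2 :=
            sq_sum_le_card_mul_sum_sq
        _ = (2:ℝ)^n * ((2:ℝ)^n * ∑ i, ‖φ i‖ ^ 2) := by
            rw [rad_norm_sq n φ]
            congr 1
            simp [Finset.card_univ]
        _ = ((2:ℝ)^n * Real.sqrt (∑ i, ‖φ i‖ ^ 2)) ^ 2 := by
            rw [mul_pow, Real.sq_sqrt hΦ]; ring
    have hA : (0:ℝ) ≤ ∑ s : Fin n → Bool, ‖v s‖ :=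
      Finset.sum_nonneg fun s _ => norm_nonneg _
    have hB : (0:ℝ) ≤ (2:ℝ)^n * Real.sqrt (∑ i, ‖φ i‖ ^ 2) := by positivity
    nlinarith [h1, hA, hB]
  have step1 : (∑ s : Fin n → Bool,
      sSup {x : ℝ | ∃ w : H, ‖w‖ ≤ r ∧ x = ∑ i, (if s i then (1:ℝ) else -1) * ⟪w, φ i⟫})
        ≤ ∑ s : Fin n → Bool, r * ‖v s‖ :=
    Finset.sum_le_sum fun s _ => hsup s
  have hn' : (0:ℝ) < n := by exact_mod_cast hn
  calc (1 / n : ℝ) * ((1 / 2 ^ n : ℝ) * ∑ s : Fin n → Bool,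
        sSup {x : ℝ | ∃ w : H, ‖w‖ ≤ r ∧ x = ∑ i, (if s i then (1:ℝ) else -1) * ⟪w, φ i⟫})
      ≤ (1 / n : ℝ) * ((1 / 2 ^ n : ℝ) * ∑ s : Fin n → Bool, r * ‖v s‖) := by
        apply mul_le_mul_of_nonneg_left _ (by positivity)
        apply mul_le_mul_of_nonneg_left step1 (by positivity)
    _ = (r / n) * ((1 / 2 ^ n : ℝ) * ∑ s : Fin n → Bool, ‖v s‖) := by
        rw [← Finset.mul_sum]; ring
    _ ≤ (r / n) * ((1 / 2 ^ n : ℝ) * ((2:ℝ)^n * Real.sqrt (∑ i, ‖φ i‖ ^ 2))) := by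
        apply mul_le_mul_of_nonneg_left _ (by positivity)
        apply mul_le_mul_of_nonneg_left hsum (by positivity)
    _ = (r / n) * Real.sqrt (∑ i, ‖φ i‖ ^ 2) := by
        have : ((2:ℝ)^n) ≠ 0 := by positivity
        field_simp
end

section
/- Let H be a real inner product space, φ₁, …, φ_n ∈ H, and r > 0. Then (1/n)·E_σ[ sup over w ∈ H with ‖w‖ ≤ r of Σᵢ₌₁ⁿ σᵢ·⟨w, φᵢ⟩ ] ≥ (r/(n·√2))·√(Σᵢ₌₁ⁿ ‖φᵢ‖²), where E_σ denotes the expectation over σ = (σ₁,…,σ_n) i.i.d. uniform on {−1,+1} (equivalently the average over all 2ⁿ sign vectors). -/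
open scoped RealInnerProductSpace

/-!
Since `⟪w, ∑ σᵢ φᵢ⟫` is maximised over the ball of radius `r` at `w = r S / ‖S‖`, where
`S = ∑ σᵢ φᵢ`, the left-hand side is `r E‖S‖ / n`, and `E‖S‖² = ∑ ‖φᵢ‖²`. The claim is thus the
Khintchine–Kahane inequality `E‖S‖² ≤ 2 (E‖S‖)²`, proved by Fourier analysis on the cube
`{-1, 1}ⁿ` as in Latała–Oleszkiewicz. The function `f = ‖S‖` is even, so its Walsh coefficients
`f̂(A)` with `|A| = 1` vanish; the triangle inequality `∑ᵢ f(σ with σᵢ flipped) ≥ (n - 2) f(σ)`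
bounds the Dirichlet form, giving `∑_A |A| f̂(A)² ≤ ∑_A f̂(A)²`. Since every nonempty `A` with
`f̂(A) ≠ 0` has `|A| ≥ 2`, this forces `∑_{A ≠ ∅} f̂(A)² ≤ f̂(∅)²`, i.e. `E f² ≤ 2 (E f)²`.
-/

open Finset

lemma mul_norm_le_sSup_inner {H : Type*} [NormedAddCommGroup H] [InnerProductSpace ℝ H]
    {r : ℝ} (hr : 0 ≤ r) (u : H) :
    r * ‖u‖ ≤ sSup {v | ∃ w : H, ‖w‖ ≤ r ∧ v = ⟪w, u⟫} := by
  refine le_csSup ⟨r * ‖u‖, ?_⟩ ⟨(r / ‖u‖) • u, ?_, ?_⟩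
  · rintro _ ⟨w, hw, rfl⟩
    exact (real_inner_le_norm w u).trans (by gcongr)
  · rw [norm_smul, norm_div, norm_norm, Real.norm_of_nonneg hr]
    rcases eq_or_ne ‖u‖ 0 with hu | hu <;> simp [hu, hr]
  · rw [real_inner_smul_left, real_inner_self_eq_norm_sq]
    rcases eq_or_ne ‖u‖ 0 with hu | hu
    · simp [hu]
    · field_simp

namespace BooleanCube

variable {ι : Type*}

def boolSign (b : Bool) : ℝ := if b then 1 else -1

@[simp] lemma boolSign_not (b : Bool) : boolSign (!b) = -boolSign b := by
  cases b <;> simp [boolSign]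

@[simp] lemma boolSign_mul_self (b : Bool) : boolSign b * boolSign b = 1 := by
  cases b <;> simp [boolSign]

lemma one_add_boolSign_mul_boolSign (a b : Bool) :
    1 + boolSign a * boolSign b = if a = b then 2 else 0 := by
  cases a <;> cases b <;> norm_num [boolSign]

def walsh (A : Finset ι) (ε : ι → Bool) : ℝ := ∏ i ∈ A, boolSign (ε i)

section

variable [Fintype ι]

lemma sum_walsh_mul_walsh (ε ε' : ι → Bool) :
    ∑ A, walsh A ε * walsh A ε' = if ε = ε' then 2 ^ Fintype.card ι else 0 := by
  calc ∑ A, walsh A ε * walsh A ε'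
      = ∏ i, (1 + boolSign (ε i) * boolSign (ε' i)) := by
        rw [prod_one_add, powerset_univ]
        simp only [walsh, prod_mul_distrib]
    _ = if ε = ε' then 2 ^ Fintype.card ι else 0 := by
        simp only [one_add_boolSign_mul_boolSign, Fintype.prod_ite_zero, funext_iff]
        simp

lemma sum_sq_le_two_mul_sq_empty {c : Finset ι → ℝ} (hc : ∀ i, c {i} = 0)
    (h : ∑ A, (#A : ℝ) * c A ^ 2 ≤ ∑ A, c A ^ 2) : ∑ A, c A ^ 2 ≤ 2 * c ∅ ^ 2 := by
  classical
  have hpoint : ∀ A, c A ^ 2 - (if A = ∅ then 2 * c A ^ 2 else 0) ≤ ((#A : ℝ) - 1) * c A ^ 2 := by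
    intro A
    obtain hA | hA | hA : #A = 0 ∨ #A = 1 ∨ 2 ≤ #A := by omega
    · rw [card_eq_zero.mp hA, if_pos rfl, card_empty, Nat.cast_zero]
      linarith
    · obtain ⟨i, rfl⟩ := card_eq_one.mp hA
      simp [hc]
    · have hA' : (2 : ℝ) ≤ #A := by exact_mod_cast hA
      rw [if_neg (by rintro rfl; simp at hA)]
      nlinarith [sq_nonneg (c A)]
  have hsum := sum_le_sum fun A (_ : A ∈ univ) => hpoint A
  simp only [sum_sub_distrib, sub_mul, one_mul, sum_ite_eq', mem_univ, if_true] at hsum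
  linarith

def rademacherSum {E : Type*} [AddCommGroup E] [Module ℝ E] (φ : ι → E) (ε : ι → Bool) : E :=
  ∑ i, boolSign (ε i) • φ i

lemma rademacherSum_not {E : Type*} [AddCommGroup E] [Module ℝ E] (φ : ι → E) (ε : ι → Bool) :
    rademacherSum φ (fun i => !ε i) = -rademacherSum φ ε := by
  simp [rademacherSum, ← sum_neg_distrib]

end

variable [DecidableEq ι]

def flipAt (i : ι) (ε : ι → Bool) : ι → Bool := Function.update ε i (!ε i)

lemma flipAt_involutive (i : ι) : Function.Involutive (flipAt i) := fun ε => by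
  simp [flipAt]

@[simp] lemma flipAt_apply_self (i : ι) (ε : ι → Bool) : flipAt i ε i = !ε i :=
  Function.update_self _ _ _

lemma flipAt_apply_of_ne {i j : ι} (h : j ≠ i) (ε : ι → Bool) : flipAt i ε j = ε j :=
  Function.update_of_ne h _ _

lemma walsh_flipAt (A : Finset ι) (i : ι) (ε : ι → Bool) :
    walsh A (flipAt i ε) = (if i ∈ A then -1 else 1) * walsh A ε := by
  have hcomp : (fun j => boolSign (flipAt i ε j))
      = Function.update (boolSign ∘ ε) i (boolSign (!ε i)) :=
    Function.comp_update boolSign ε i _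
  unfold walsh
  rw [hcomp]
  split_ifs with hi
  · rw [prod_update_of_mem hi, ← mul_prod_erase A _ hi, boolSign_not, sdiff_singleton_eq_erase]
    simp only [Function.comp_apply]
    ring
  · rw [prod_update_of_notMem hi, one_mul]
    rfl

variable [Fintype ι]

lemma sum_comp_flipAt {M : Type*} [AddCommMonoid M] (i : ι) (F : (ι → Bool) → M) :
    ∑ ε, F (flipAt i ε) = ∑ ε, F ε :=
  Equiv.sum_comp ((flipAt_involutive i).toPerm _) F

def walshCoeff (f : (ι → Bool) → ℝ) (A : Finset ι) : ℝ := ∑ ε, f ε * walsh A ε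

lemma sum_walshCoeff_sq (f : (ι → Bool) → ℝ) :
    ∑ A, walshCoeff f A ^ 2 = 2 ^ Fintype.card ι * ∑ ε, f ε ^ 2 := by
  calc ∑ A, walshCoeff f A ^ 2
      = ∑ ε, ∑ ε', f ε * f ε' * ∑ A, walsh A ε * walsh A ε' := by
        simp only [walshCoeff, sq, sum_mul_sum]
        rw [sum_comm]
        refine sum_congr rfl fun ε _ => ?_
        rw [sum_comm]
        exact sum_congr rfl fun ε' _ => by rw [mul_sum]; exact sum_congr rfl fun A _ => by ring
    _ = 2 ^ Fintype.card ι * ∑ ε, f ε ^ 2 := by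
        simp only [sum_walsh_mul_walsh, mul_ite, mul_zero, sum_ite_eq, mem_univ, if_true,
          mul_sum, sq]
        exact sum_congr rfl fun ε _ => by ring

lemma walshCoeff_sub (f g : (ι → Bool) → ℝ) (A : Finset ι) :
    walshCoeff (fun ε => f ε - g ε) A = walshCoeff f A - walshCoeff g A := by
  simp only [walshCoeff, sub_mul, sum_sub_distrib]

lemma walshCoeff_empty (f : (ι → Bool) → ℝ) : walshCoeff f ∅ = ∑ ε, f ε := by
  simp [walshCoeff, walsh]

lemma walshCoeff_singleton_eq_zero {f : (ι → Bool) → ℝ} (hf : ∀ ε, f (fun i => !ε i) = f ε)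
    (i : ι) : walshCoeff f {i} = 0 := by
  have hinv : Function.Involutive fun (ε : ι → Bool) (i : ι) => !ε i := fun ε => by simp
  refine self_eq_neg.mp ?_
  calc walshCoeff f {i} = ∑ ε : ι → Bool, f (fun j => !ε j) * walsh {i} (fun j => !ε j) :=
        (Equiv.sum_comp (hinv.toPerm _) (fun ε => f ε * walsh {i} ε)).symm
    _ = -walshCoeff f {i} := by
        simp only [hf, walsh, prod_singleton, boolSign_not, walshCoeff, ← sum_neg_distrib]
        exact sum_congr rfl fun ε _ => by ring

lemma walshCoeff_comp_flipAt (f : (ι → Bool) → ℝ) (i : ι) (A : Finset ι) :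
    walshCoeff (fun ε => f (flipAt i ε)) A = (if i ∈ A then -1 else 1) * walshCoeff f A := by
  unfold walshCoeff
  rw [← sum_comp_flipAt i, mul_sum]
  refine sum_congr rfl fun ε _ => ?_
  dsimp only
  rw [flipAt_involutive i ε, walsh_flipAt]
  ring

lemma four_mul_sum_card_mul_sq_walshCoeff (f : (ι → Bool) → ℝ) :
    4 * ∑ A, (#A : ℝ) * walshCoeff f A ^ 2
      = 2 ^ Fintype.card ι * ∑ i, ∑ ε, (f ε - f (flipAt i ε)) ^ 2 := by
  have hcoeff : ∀ i A, walshCoeff (fun ε => f ε - f (flipAt i ε)) A ^ 2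
      = if i ∈ A then 4 * walshCoeff f A ^ 2 else 0 := fun i A => by
    rw [walshCoeff_sub, walshCoeff_comp_flipAt]
    split_ifs <;> ring
  calc 4 * ∑ A, (#A : ℝ) * walshCoeff f A ^ 2
      = ∑ i, ∑ A, walshCoeff (fun ε => f ε - f (flipAt i ε)) A ^ 2 := by
        simp only [hcoeff, mul_sum]
        rw [sum_comm]
        refine sum_congr rfl fun A _ => ?_
        rw [Fintype.sum_ite_mem, sum_const, nsmul_eq_mul]
        ring
    _ = 2 ^ Fintype.card ι * ∑ i, ∑ ε, (f ε - f (flipAt i ε)) ^ 2 := by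
        simp only [sum_walshCoeff_sq, mul_sum]

lemma sum_sum_sq_sub_comp_flipAt_le {f : (ι → Bool) → ℝ} (hf_nonneg : ∀ ε, 0 ≤ f ε)
    (hf_flip : ∀ ε, ((Fintype.card ι : ℝ) - 2) * f ε ≤ ∑ i, f (flipAt i ε)) :
    ∑ i, ∑ ε, (f ε - f (flipAt i ε)) ^ 2 ≤ 4 * ∑ ε, f ε ^ 2 := by
  have hsq : ∀ i, ∑ ε, (f ε - f (flipAt i ε)) ^ 2
      = 2 * ∑ ε, f ε ^ 2 - 2 * ∑ ε, f ε * f (flipAt i ε) := fun i => by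
    have := sum_comp_flipAt i fun ε => f ε ^ 2
    simp only [sub_sq, sum_add_distrib, sum_sub_distrib, this, ← mul_sum, mul_assoc]
    ring
  calc ∑ i, ∑ ε, (f ε - f (flipAt i ε)) ^ 2
      = 2 * Fintype.card ι * ∑ ε, f ε ^ 2 - 2 * ∑ ε, f ε * ∑ i, f (flipAt i ε) := by
        simp only [hsq, sum_sub_distrib, sum_const, card_univ, nsmul_eq_mul, ← mul_sum]
        rw [sum_comm (f := fun i ε => f ε * f (flipAt i ε))]
        simp only [← mul_sum]
        ring
    _ ≤ 2 * Fintype.card ι * ∑ ε, f ε ^ 2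
          - 2 * ∑ ε, f ε * (((Fintype.card ι : ℝ) - 2) * f ε) := by
        gcongr with ε
        exacts [hf_nonneg ε, hf_flip ε]
    _ = 4 * ∑ ε, f ε ^ 2 := by
        simp only [mul_sum]
        rw [← sum_sub_distrib]
        exact sum_congr rfl fun ε _ => by ring

theorem two_pow_card_mul_sum_sq_le {f : (ι → Bool) → ℝ} (hf_nonneg : ∀ ε, 0 ≤ f ε)
    (hf_even : ∀ ε, f (fun i => !ε i) = f ε)
    (hf_flip : ∀ ε, ((Fintype.card ι : ℝ) - 2) * f ε ≤ ∑ i, f (flipAt i ε)) :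
    2 ^ Fintype.card ι * ∑ ε, f ε ^ 2 ≤ 2 * (∑ ε, f ε) ^ 2 := by
  have hspectral : ∑ A, (#A : ℝ) * walshCoeff f A ^ 2 ≤ ∑ A, walshCoeff f A ^ 2 := by
    have hdirichlet := four_mul_sum_card_mul_sq_walshCoeff f
    have hflip := sum_sum_sq_sub_comp_flipAt_le hf_nonneg hf_flip
    rw [sum_walshCoeff_sq]
    nlinarith [pow_pos (two_pos (α := ℝ)) (Fintype.card ι)]
  rw [← sum_walshCoeff_sq, ← walshCoeff_empty]
  exact sum_sq_le_two_mul_sq_empty (walshCoeff_singleton_eq_zero hf_even) hspectral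

lemma rademacherSum_flipAt {E : Type*} [AddCommGroup E] [Module ℝ E] (φ : ι → E) (i : ι)
    (ε : ι → Bool) :
    rademacherSum φ (flipAt i ε) = rademacherSum φ ε - (2 : ℝ) • (boolSign (ε i) • φ i) := by
  have hrest : ∑ j ∈ univ.erase i, boolSign (flipAt i ε j) • φ j
      = ∑ j ∈ univ.erase i, boolSign (ε j) • φ j :=
    sum_congr rfl fun j hj => by rw [flipAt_apply_of_ne (ne_of_mem_erase hj)]
  unfold rademacherSum
  rw [← add_sum_erase _ _ (mem_univ i), ← add_sum_erase _ _ (mem_univ i), hrest]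
  simp only [flipAt, Function.update_self, boolSign_not, neg_smul]
  module

lemma card_sub_two_mul_norm_rademacherSum_le {E : Type*} [NormedAddCommGroup E]
    [NormedSpace ℝ E] (φ : ι → E) (ε : ι → Bool) :
    ((Fintype.card ι : ℝ) - 2) * ‖rademacherSum φ ε‖ ≤ ∑ i, ‖rademacherSum φ (flipAt i ε)‖ := by
  have hsum :
      ∑ i, rademacherSum φ (flipAt i ε) = ((Fintype.card ι : ℝ) - 2) • rademacherSum φ ε := by
    simp only [rademacherSum_flipAt, sum_sub_distrib, ← smul_sum, sum_const, card_univ]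
    rw [← rademacherSum, sub_smul, Nat.cast_smul_eq_nsmul]
  calc ((Fintype.card ι : ℝ) - 2) * ‖rademacherSum φ ε‖
      ≤ ‖((Fintype.card ι : ℝ) - 2) • rademacherSum φ ε‖ := by
        rw [norm_smul]
        gcongr
        exact Real.le_norm_self _
    _ ≤ ∑ i, ‖rademacherSum φ (flipAt i ε)‖ := hsum ▸ norm_sum_le _ _

lemma sum_boolSign_mul_boolSign (i j : ι) :
    ∑ ε : ι → Bool, boolSign (ε i) * boolSign (ε j) = if i = j then 2 ^ Fintype.card ι else 0 := by
  split_ifs with h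
  · simp [h]
  · refine self_eq_neg.mp ?_
    calc ∑ ε : ι → Bool, boolSign (ε i) * boolSign (ε j)
        = ∑ ε, boolSign (flipAt i ε i) * boolSign (flipAt i ε j) :=
          (sum_comp_flipAt i fun ε => boolSign (ε i) * boolSign (ε j)).symm
      _ = -∑ ε : ι → Bool, boolSign (ε i) * boolSign (ε j) := by
          simp only [flipAt_apply_self, flipAt_apply_of_ne (Ne.symm h), boolSign_not, neg_mul,
            sum_neg_distrib]

lemma sum_norm_rademacherSum_sq {H : Type*} [NormedAddCommGroup H] [InnerProductSpace ℝ H]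
    (φ : ι → H) :
    ∑ ε, ‖rademacherSum φ ε‖ ^ 2 = 2 ^ Fintype.card ι * ∑ i, ‖φ i‖ ^ 2 := by
  calc ∑ ε, ‖rademacherSum φ ε‖ ^ 2
      = ∑ i, ∑ j, (∑ ε : ι → Bool, boolSign (ε i) * boolSign (ε j)) * ⟪φ i, φ j⟫ := by
        simp only [← real_inner_self_eq_norm_sq, rademacherSum, sum_inner, inner_sum,
          real_inner_smul_left, real_inner_smul_right, sum_mul]
        rw [sum_comm]
        refine sum_congr rfl fun i _ => ?_
        rw [sum_comm]
        exact sum_congr rfl fun j _ => sum_congr rfl fun ε _ => by rw [real_inner_comm]; ring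
    _ = 2 ^ Fintype.card ι * ∑ i, ‖φ i‖ ^ 2 := by
        simp [sum_boolSign_mul_boolSign, ite_mul, mul_sum]

theorem two_pow_card_mul_sqrt_sum_norm_sq_le {H : Type*} [NormedAddCommGroup H]
    [InnerProductSpace ℝ H] (φ : ι → H) :
    2 ^ Fintype.card ι * √(∑ i, ‖φ i‖ ^ 2) ≤ √2 * ∑ ε, ‖rademacherSum φ ε‖ := by
  have hkk := two_pow_card_mul_sum_sq_le (f := fun ε => ‖rademacherSum φ ε‖)
    (fun ε => norm_nonneg _) (fun ε => by simp only [rademacherSum_not, norm_neg])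
    (card_sub_two_mul_norm_rademacherSum_le φ)
  rw [sum_norm_rademacherSum_sq] at hkk
  refine (pow_le_pow_iff_left₀ (by positivity) (by positivity) two_ne_zero).mp ?_
  rw [mul_pow, mul_pow, Real.sq_sqrt (by positivity), Real.sq_sqrt zero_le_two]
  linarith

end BooleanCube

open BooleanCube

theorem stmt15_general {H : Type*} [NormedAddCommGroup H] [InnerProductSpace ℝ H]
    (n : ℕ) (φ : Fin n → H) (r : ℝ) (hr : 0 < r) :
    (1 / n : ℝ) * ((1 / 2 ^ n : ℝ) * ∑ s : Fin n → Bool,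
        sSup {v : ℝ | ∃ w : H, ‖w‖ ≤ r ∧
          v = ∑ i, (if s i then (1 : ℝ) else -1) * ⟪w, φ i⟫}) ≥
      (r / (n * Real.sqrt 2)) * Real.sqrt (∑ i, ‖φ i‖ ^ 2) := by
  have hsup (s : Fin n → Bool) : r * ‖rademacherSum φ s‖ ≤ sSup {v : ℝ | ∃ w : H, ‖w‖ ≤ r ∧
      v = ∑ i, (if s i then (1 : ℝ) else -1) * ⟪w, φ i⟫} := by
    simpa only [rademacherSum, inner_sum, real_inner_smul_right, boolSign]
      using mul_norm_le_sSup_inner hr.le (rademacherSum φ s)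
  have hkk := two_pow_card_mul_sqrt_sum_norm_sq_le φ
  rw [Fintype.card_fin] at hkk
  calc (r / (n * √2)) * √(∑ i, ‖φ i‖ ^ 2)
      = (1 / n : ℝ) * ((1 / 2 ^ n : ℝ) * (r / √2 * (2 ^ n * √(∑ i, ‖φ i‖ ^ 2)))) := by
        field_simp
    _ ≤ (1 / n : ℝ) * ((1 / 2 ^ n : ℝ) * (r / √2 * (√2 * ∑ s, ‖rademacherSum φ s‖))) := by
        gcongr
    _ = (1 / n : ℝ) * ((1 / 2 ^ n : ℝ) * ∑ s, r * ‖rademacherSum φ s‖) := by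
        rw [← mul_assoc (r / √2), div_mul_cancel₀ r (by positivity), mul_sum]
    _ ≤ _ := by
        gcongr with s
        exact hsup s

/-- Lower bound (via Khintchine–Kahane) on the empirical Rademacher complexity of a ball of
radius `r` of linear functionals on an inner product space: it is at least
`(r/(n√2)) √(Σᵢ ‖φᵢ‖²)`. -/
theorem stmt15 {H : Type*} [NormedAddCommGroup H] [InnerProductSpace ℝ H]
    (n : ℕ) (hn : 0 < n) (φ : Fin n → H) (r : ℝ) (hr : 0 < r) :
    (1 / n : ℝ) * ((1 / 2 ^ n : ℝ) * ∑ s : Fin n → Bool,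
        sSup {v : ℝ | ∃ w : H, ‖w‖ ≤ r ∧
          v = ∑ i, (if s i then (1 : ℝ) else -1) * ⟪w, φ i⟫}) ≥
      (r / (n * Real.sqrt 2)) * Real.sqrt (∑ i, ‖φ i‖ ^ 2) :=
  stmt15_general n φ r hr
end

section
/- Let H be a real inner product space whose elements are functions X → ℝ with reproducing kernel k (i.e. k(·,x) ∈ H and ⟨k(·,x),f⟩_H = f(x) for all f, x). Let x₁,…,x_{n+m} ∈ X, let L be a symmetric positive semidefinite (n+m)×(n+m) matrix, μ > 0, K the Gram matrix K_{ij} = k(xᵢ,xⱼ), assume μ⁻¹I + LK is invertible, and equip H with the modified inner product ⟨f,g⟩_H̃ = ⟨f,g⟩_H + μ·f_Uᵀ L g_U where f_U = (f(x₁),…,f(x_{n+m}))ᵀ. Let H̃_r = {f ∈ H : ⟨f,f⟩_H̃ ≤ r²} for r > 0. Then the empirical Rademacher complexity on the first n points satisfies (1/n)·E_σ[ sup over f ∈ H̃_r of Σᵢ₌₁ⁿ σᵢ·f(xᵢ) ] ≤ (r/n)·√( Σᵢ₌₁ⁿ [ k(xᵢ,xᵢ) − k_{xᵢ}ᵀ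 (μ⁻¹I + LK)⁻¹ L k_{xᵢ} ] ), where k_x = (k(x₁,x),…,k(x_{n+m},x))ᵀ and E_σ denotes the expectation over σ = (σ₁,…,σ_n) i.i.d. uniform on {−1,+1} (equivalently the average over all 2ⁿ sign vectors). -/
/-!
Write `L = Bᵀ B`. The modified form `⟪f, g⟫ + μ f_Uᵀ L g_U` is then the pullback of the inner
product of `H × ℝ^(n+m)` along `f ↦ (f, √μ B f_U)`, and with `c = (μ⁻¹ I + L K)⁻¹ L k_y` the
function `k̃_y = k(·, y) - ∑ⱼ cⱼ k(·, xⱼ)` reproduces evaluation at `y` for that form.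
So `∑ᵢ σᵢ f(xᵢ)` is the inner product of `f` with `∑ᵢ σᵢ k̃_{xᵢ}`, which Cauchy–Schwarz bounds by
`r ‖∑ᵢ σᵢ k̃_{xᵢ}‖` on the ball. Averaging over signs, Jensen and the iterated parallelogram law
`∑_σ ‖∑ᵢ σᵢ vᵢ‖² = 2ⁿ ∑ᵢ ‖vᵢ‖²` finish the proof, as `‖k̃_{xᵢ}‖² = k̃_{xᵢ}(xᵢ)`.
-/

open Matrix
open scoped RealInnerProductSpace

section SignAverages

variable {E : Type*} [NormedAddCommGroup E] [InnerProductSpace ℝ E]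

theorem sum_norm_sq_signed_sum : ∀ {n : ℕ} (v : Fin n → E),
    ∑ s : Fin n → Bool, ‖∑ i, (if s i then (1 : ℝ) else -1) • v i‖ ^ 2 =
      2 ^ n * ∑ i, ‖v i‖ ^ 2
  | 0, v => by simp
  | n + 1, v => by
    rw [← (Fin.consEquiv fun _ => Bool).sum_comp, Fintype.sum_prod_type, Fintype.sum_bool]
    simp only [Fin.consEquiv_apply, Fin.sum_univ_succ, Fin.cons_zero, Fin.cons_succ,
      if_true, Bool.false_eq_true, if_false, one_smul, neg_one_smul, ← Finset.sum_add_distrib]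
    have parallelogram (w : E) : ‖v 0 + w‖ ^ 2 + ‖-v 0 + w‖ ^ 2 = 2 * (‖v 0‖ ^ 2 + ‖w‖ ^ 2) := by
      rw [neg_add_eq_sub, ← norm_neg (w - v 0), neg_sub, parallelogram_law_with_norm ℝ]
    simp only [parallelogram, ← Finset.mul_sum, Finset.sum_add_distrib, sum_norm_sq_signed_sum]
    simp only [Finset.sum_const, Finset.card_univ, Fintype.card_pi, Fintype.card_bool,
      Finset.prod_const, Fintype.card_fin, nsmul_eq_mul, Nat.cast_pow, Nat.cast_ofNat]
    ring

theorem sum_norm_signed_sum_le {n : ℕ} (v : Fin n → E) :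
    ∑ s : Fin n → Bool, ‖∑ i, (if s i then (1 : ℝ) else -1) • v i‖ ≤
      2 ^ n * √(∑ i, ‖v i‖ ^ 2) := by
  have hcs := sq_sum_le_card_mul_sum_sq (s := Finset.univ)
    (f := fun s : Fin n → Bool => ‖∑ i, (if s i then (1 : ℝ) else -1) • v i‖)
  rw [sum_norm_sq_signed_sum, Finset.card_univ, Fintype.card_fun, Fintype.card_bool,
    Fintype.card_fin] at hcs
  calc _ ≤ √(((2 : ℝ) ^ n) ^ 2 * ∑ i, ‖v i‖ ^ 2) :=
        Real.le_sqrt_of_sq_le (hcs.trans_eq (by push_cast; ring))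
    _ = _ := by rw [Real.sqrt_mul (by positivity), Real.sqrt_sq (by positivity)]

theorem sum_sSup_signed_sum_le {F : Type*} {n : ℕ} (φ : F → E) (P : F → Prop) {r : ℝ}
    (hr : 0 ≤ r) (hP : ∀ f, P f → ‖φ f‖ ≤ r) (v : Fin n → E) (a : F → Fin n → ℝ)
    (ha : ∀ f i, a f i = ⟪v i, φ f⟫) :
    ∑ s : Fin n → Bool, sSup {t | ∃ f, P f ∧ t = ∑ i, (if s i then (1 : ℝ) else -1) * a f i} ≤
      2 ^ n * (r * √(∑ i, ‖v i‖ ^ 2)) := by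
  have hsup (s : Fin n → Bool) :
      sSup {t | ∃ f, P f ∧ t = ∑ i, (if s i then (1 : ℝ) else -1) * a f i} ≤
        r * ‖∑ i, (if s i then (1 : ℝ) else -1) • v i‖ := by
    refine Real.sSup_le ?_ (by positivity)
    rintro _ ⟨f, hf, rfl⟩
    calc ∑ i, (if s i then (1 : ℝ) else -1) * a f i
        = ⟪∑ i, (if s i then (1 : ℝ) else -1) • v i, φ f⟫ := by
          simp only [ha, sum_inner, real_inner_smul_left]
      _ ≤ ‖∑ i, (if s i then (1 : ℝ) else -1) • v i‖ * ‖φ f‖ := real_inner_le_norm _ _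
      _ ≤ r * ‖∑ i, (if s i then (1 : ℝ) else -1) • v i‖ := by
          rw [mul_comm]; exact mul_le_mul_of_nonneg_right (hP f hf) (norm_nonneg _)
  calc _ ≤ ∑ s : Fin n → Bool, r * ‖∑ i, (if s i then (1 : ℝ) else -1) • v i‖ :=
        Finset.sum_le_sum fun s _ => hsup s
    _ ≤ r * (2 ^ n * √(∑ i, ‖v i‖ ^ 2)) := by
        rw [← Finset.mul_sum]; exact mul_le_mul_of_nonneg_left (sum_norm_signed_sum_le v) hr
    _ = _ := by ring

end SignAverages

open scoped MatrixOrder in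
theorem exists_inner_eq_inner_add_dotProduct_mulVec {H ι : Type*} [NormedAddCommGroup H]
    [InnerProductSpace ℝ H] [Fintype ι] (fU : H → ι → ℝ) {L : Matrix ι ι ℝ} (hL : L.PosSemidef)
    {μ : ℝ} (hμ : 0 ≤ μ) :
    ∃ Φ : H → WithLp 2 (H × EuclideanSpace ℝ ι),
      ∀ f g, ⟪Φ f, Φ g⟫ = ⟪f, g⟫ + μ * (fU f ⬝ᵥ L *ᵥ fU g) := by
  classical
  obtain ⟨B, rfl⟩ := CStarAlgebra.nonneg_iff_eq_star_mul_self.mp hL.nonneg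
  refine ⟨fun f => WithLp.toLp 2 (f, √μ • WithLp.toLp 2 (B *ᵥ fU f)), fun f g => ?_⟩
  rw [WithLp.prod_inner_apply, real_inner_smul_left, real_inner_smul_right, ← mul_assoc,
    Real.mul_self_sqrt hμ, EuclideanSpace.inner_eq_star_dotProduct, ← mulVec_mulVec,
    dotProduct_mulVec, star_eq_conjTranspose, conjTranspose_eq_transpose_of_trivial,
    vecMul_transpose, star_trivial, dotProduct_comm]

theorem smul_mulVec_sub_mulVec_inv_smul_one_add_mul {𝕜 ι : Type*} [Field 𝕜] [Fintype ι]
    [DecidableEq ι] {L K : Matrix ι ι 𝕜} {μ : 𝕜} (hμ : μ ≠ 0) (hM : IsUnit (μ⁻¹ • 1 + L * K))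
    (v : ι → 𝕜) :
    μ • (L *ᵥ (v - K *ᵥ ((μ⁻¹ • 1 + L * K)⁻¹ *ᵥ (L *ᵥ v)))) =
      (μ⁻¹ • 1 + L * K)⁻¹ *ᵥ (L *ᵥ v) := by
  set c := (μ⁻¹ • 1 + L * K)⁻¹ *ᵥ (L *ᵥ v)
  have hMc : (μ⁻¹ • 1 + L * K) *ᵥ c = L *ᵥ v := by
    rw [mulVec_mulVec, mul_nonsing_inv _ ((isUnit_iff_isUnit_det _).mp hM), one_mulVec]
  rw [add_mulVec, smul_mulVec, one_mulVec, ← mulVec_mulVec] at hMc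
  rw [mulVec_sub, ← hMc, add_sub_cancel_right, smul_smul, mul_inv_cancel₀ hμ, one_smul]

section ModifiedKernel

variable {H X ι : Type*} [NormedAddCommGroup H] [InnerProductSpace ℝ H] [Fintype ι]
  {ev : H →ₗ[ℝ] X → ℝ} {k : X → X → ℝ} {Krep : X → H}

def modifiedRepresenter (Krep : X → H) (x : ι → X) (c : ι → ℝ) (y : X) : H :=
  Krep y - ∑ j, c j • Krep (x j)

theorem kernel_symm (hmem : ∀ y, ev (Krep y) = fun z => k z y)
    (hrep : ∀ y f, ⟪Krep y, f⟫ = ev f y) (a b : X) : k a b = k b a := by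
  rw [← congrFun (hmem b) a, ← congrFun (hmem a) b, ← hrep, ← hrep, real_inner_comm]

theorem modifiedRepresenter_apply (hmem : ∀ y, ev (Krep y) = fun z => k z y) (x : ι → X)
    (c : ι → ℝ) (y z : X) :
    ev (modifiedRepresenter Krep x c y) z = k z y - ∑ j, c j * k z (x j) := by
  simp [modifiedRepresenter, hmem]

theorem modifiedRepresenter_apply_self (hmem : ∀ y, ev (Krep y) = fun z => k z y)
    (hrep : ∀ y f, ⟪Krep y, f⟫ = ev f y) (x : ι → X) (c : ι → ℝ) (y : X) :
    ev (modifiedRepresenter Krep x c y) y = k y y - (fun i => k (x i) y) ⬝ᵥ c := by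
  simp [modifiedRepresenter_apply hmem, dotProduct, mul_comm, kernel_symm hmem hrep y]

theorem inner_modifiedRepresenter (hrep : ∀ y f, ⟪Krep y, f⟫ = ev f y) (x : ι → X)
    (c : ι → ℝ) (y : X) (f : H) :
    ⟪modifiedRepresenter Krep x c y, f⟫ = ev f y - c ⬝ᵥ fun j => ev f (x j) := by
  simp [modifiedRepresenter, inner_sub_left, sum_inner, real_inner_smul_left, hrep, dotProduct]

theorem modifiedRepresenter_reproducing (hmem : ∀ y, ev (Krep y) = fun z => k z y)
    (hrep : ∀ y f, ⟪Krep y, f⟫ = ev f y) (x : ι → X) {L : Matrix ι ι ℝ} (hL : L.IsSymm)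
    {μ : ℝ} {c : ι → ℝ} {y : X}
    (hc : μ • (L *ᵥ ((fun i => k (x i) y) - (of fun i j => k (x i) (x j)) *ᵥ c)) = c) (f : H) :
    ⟪modifiedRepresenter Krep x c y, f⟫ +
        μ * ((fun i => ev (modifiedRepresenter Krep x c y) (x i)) ⬝ᵥ L *ᵥ fun i => ev f (x i)) =
      ev f y := by
  have hU : (fun i => ev (modifiedRepresenter Krep x c y) (x i)) =
      (fun i => k (x i) y) - (of fun i j => k (x i) (x j)) *ᵥ c := by
    ext i
    simp [modifiedRepresenter_apply hmem, mulVec, dotProduct, mul_comm]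
  rw [inner_modifiedRepresenter hrep, hU, dotProduct_mulVec, ← mulVec_transpose, hL.eq,
    ← smul_eq_mul, ← smul_dotProduct, hc, sub_add_cancel]

end ModifiedKernel

theorem stmt16_general {H X : Type*} [NormedAddCommGroup H] [InnerProductSpace ℝ H]
    (ev : H →ₗ[ℝ] X → ℝ)
    (k : X → X → ℝ) (Krep : X → H)
    (hmem : ∀ y, ev (Krep y) = fun z => k z y)
    (hrep : ∀ (y : X) (f : H), ⟪Krep y, f⟫ = ev f y)
    (n m : ℕ) (x : Fin (n + m) → X)
    (L : Matrix (Fin (n + m)) (Fin (n + m)) ℝ) (hL : L.PosSemidef)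
    (μ : ℝ) (hμ : 0 < μ)
    (K : Matrix (Fin (n + m)) (Fin (n + m)) ℝ) (hK : ∀ i j, K i j = k (x i) (x j))
    (M : Matrix (Fin (n + m)) (Fin (n + m)) ℝ)
    (hM : M = μ⁻¹ • (1 : Matrix (Fin (n + m)) (Fin (n + m)) ℝ) + L * K)
    (hMinv : IsUnit M)
    (fU : H → Fin (n + m) → ℝ) (hfU : ∀ f i, fU f i = ev f (x i))
    (kvec : X → Fin (n + m) → ℝ) (hkvec : ∀ y i, kvec y i = k (x i) y)
    (r : ℝ) (hr : 0 < r) :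
    (1 / n : ℝ) * ((1 / 2 ^ n : ℝ) * ∑ s : Fin n → Bool,
        sSup {v : ℝ | ∃ f : H, ⟪f, f⟫ + μ * (fU f ⬝ᵥ L *ᵥ fU f) ≤ r ^ 2 ∧
          v = ∑ i : Fin n, (if s i then (1 : ℝ) else -1) * ev f (x (Fin.castAdd m i))}) ≤
      (r / n) * Real.sqrt (∑ i : Fin n,
        (k (x (Fin.castAdd m i)) (x (Fin.castAdd m i)) -
          kvec (x (Fin.castAdd m i)) ⬝ᵥ M⁻¹ *ᵥ (L *ᵥ kvec (x (Fin.castAdd m i))))) := by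
  obtain rfl : K = of fun i j => k (x i) (x j) := Matrix.ext hK
  obtain rfl : kvec = fun y i => k (x i) y := funext₂ hkvec
  obtain rfl : fU = fun f i => ev f (x i) := funext₂ hfU
  subst hM
  obtain ⟨Φ, hΦ⟩ := exists_inner_eq_inner_add_dotProduct_mulVec (fun f i => ev f (x i)) hL hμ.le
  set y := fun i : Fin n => x (Fin.castAdd m i)
  set c := fun i => (μ⁻¹ • 1 + L * of fun i j => k (x i) (x j))⁻¹ *ᵥ
    (L *ᵥ fun j => k (x j) (y i))
  set u := fun i => Φ (modifiedRepresenter Krep x (c i) (y i))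
  have hu (i : Fin n) (f : H) : ⟪u i, Φ f⟫ = ev f (y i) := by
    rw [hΦ]
    exact modifiedRepresenter_reproducing hmem hrep x hL.1
      (smul_mulVec_sub_mulVec_inv_smul_one_add_mul hμ.ne' hMinv _) f
  have hnorm (i : Fin n) : ‖u i‖ ^ 2 = k (y i) (y i) - (fun j => k (x j) (y i)) ⬝ᵥ c i := by
    rw [← real_inner_self_eq_norm_sq, hu, modifiedRepresenter_apply_self hmem hrep]
  have hball (f : H)
      (hf : ⟪f, f⟫ + μ * ((fun i => ev f (x i)) ⬝ᵥ L *ᵥ fun i => ev f (x i)) ≤ r ^ 2) :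
      ‖Φ f‖ ≤ r :=
    (pow_le_pow_iff_left₀ (norm_nonneg _) hr.le two_ne_zero).mp
      (by rwa [← real_inner_self_eq_norm_sq, hΦ])
  have hsum := sum_sSup_signed_sum_le Φ _ hr.le hball u (fun f i => ev f (y i))
    fun f i => (hu i f).symm
  simp only [hnorm] at hsum
  calc _ ≤ (1 / n : ℝ) * ((1 / 2 ^ n : ℝ) * (2 ^ n * (r * √(∑ i,
          (k (y i) (y i) - (fun j => k (x j) (y i)) ⬝ᵥ c i))))) := by
        gcongr
    _ = _ := by
        rw [← mul_assoc (1 / 2 ^ n : ℝ), one_div_mul_cancel (by positivity), one_mul]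
        ring

/-- Upper bound on the empirical Rademacher complexity of the manifold-regularized ball
`H̃_r = {f | ⟨f,f⟩ + μ f_Uᵀ L f_U ≤ r²}`, measured on the first `n` of the `n + m` points:
`Rad_n(H̃_r) ≤ (r/n) √(Σᵢ₌₁ⁿ [k(xᵢ,xᵢ) - k_{xᵢ}ᵀ (μ⁻¹ I + L K)⁻¹ L k_{xᵢ}])`. -/
theorem stmt16 {H X : Type*} [NormedAddCommGroup H] [InnerProductSpace ℝ H]
    (ev : H →ₗ[ℝ] X → ℝ) (hev : Function.Injective ev)
    (k : X → X → ℝ) (Krep : X → H)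
    (hmem : ∀ y, ev (Krep y) = fun z => k z y)
    (hrep : ∀ (y : X) (f : H), ⟪Krep y, f⟫ = ev f y)
    (n m : ℕ) (hn : 0 < n) (x : Fin (n + m) → X)
    (L : Matrix (Fin (n + m)) (Fin (n + m)) ℝ) (hL : L.PosSemidef)
    (μ : ℝ) (hμ : 0 < μ)
    (K : Matrix (Fin (n + m)) (Fin (n + m)) ℝ) (hK : ∀ i j, K i j = k (x i) (x j))
    (M : Matrix (Fin (n + m)) (Fin (n + m)) ℝ)
    (hM : M = μ⁻¹ • (1 : Matrix (Fin (n + m)) (Fin (n + m)) ℝ) + L * K)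
    (hMinv : IsUnit M)
    (fU : H → Fin (n + m) → ℝ) (hfU : ∀ f i, fU f i = ev f (x i))
    (kvec : X → Fin (n + m) → ℝ) (hkvec : ∀ y i, kvec y i = k (x i) y)
    (r : ℝ) (hr : 0 < r) :
    (1 / n : ℝ) * ((1 / 2 ^ n : ℝ) * ∑ s : Fin n → Bool,
        sSup {v : ℝ | ∃ f : H, ⟪f, f⟫ + μ * (fU f ⬝ᵥ L *ᵥ fU f) ≤ r ^ 2 ∧
          v = ∑ i : Fin n, (if s i then (1 : ℝ) else -1) * ev f (x (Fin.castAdd m i))}) ≤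
      (r / n) * Real.sqrt (∑ i : Fin n,
        (k (x (Fin.castAdd m i)) (x (Fin.castAdd m i)) -
          kvec (x (Fin.castAdd m i)) ⬝ᵥ M⁻¹ *ᵥ (L *ᵥ kvec (x (Fin.castAdd m i))))) :=
  stmt16_general ev k Krep hmem hrep n m x L hL μ hμ K hK M hM hMinv fU hfU kvec hkvec r hr
end
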